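/- For every n ≥ 1, if a ∈ T_n and b ∈ T_{n+1} both have rank 1, then the minimum transformation degree of the variant T_n^a is strictly less than the minimum transformation degree of the variant T_{n+1}^b. In other words, writing μ(n) for the degree of T_n^a with rank(a) = 1, the sequence μ(1) < μ(2) < μ(3) < ⋯ is strictly increasing. -/

import Mathlib

/-- Multiplication of the full transformation semigroup: `(f * g) x = g (f x)`. -/
def tMul {n : ℕ} (f g : Fin n → Fin n) : Fin n → Fin n := fun x => g (f x)

/-- The rank of a transformation: the cardinality of its image. -/
def trank {n : ℕ} (f : Fin n → Fin n) : ℕ := (Finset.univ.image f).card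

/-- The minimum transformation degree of the variant `T_n^a` (operation
`f ⋆ g = fun x => g (a (f x))`): the least `m ≥ 1` such that there is an injective
semigroup homomorphism from `T_n^a` into `T_m`. -/
noncomputable def variantDegree (n : ℕ) (a : Fin n → Fin n) : ℕ :=
  sInf {m | 1 ≤ m ∧ ∃ φ : (Fin n → Fin n) → (Fin m → Fin m), Function.Injective φ ∧
      ∀ f g : Fin n → Fin n, φ (fun x => g (a (f x))) = tMul (φ f) (φ g)}

/-!
Write the rank-one sandwich element as the constant map `c`, so that `f ⋆ g` is the constant map
with value `g c`. For a faithful representation `φ` of this variant on a set `X`, the points of `X`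
with the same images under the representatives of the constant maps form blocks, and each block
splits into `d` points in the joint range of `φ` and `t` points outside it. The constant maps
inject into the choices of one range point per block, and the maps fixing `c` inject into the maps
from the outside points to the range points of the same block, so `n ≤ ∏ d` and
`n ^ (n - 1) ≤ ∏ d ^ t`. Conversely, block sizes satisfying both inequalities carry a faithful
representation. Hence `μ(n)` is the least `∑ (d + t)` under these constraints, and one point can
be saved when passing from `n + 1` to `n`: drop an outside point from a block with `d ≤ 2 n`,
which costs a factor `d ≤ 2 n` and `2 n ^ n ≤ (n + 1) ^ n`; if no such block exists, the single
block `d = n`, `t = n - 1` is already small enough.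
-/

section

open Function

variable {n m : ℕ}

theorem exists_eq_const_of_trank_eq_one {a : Fin n → Fin n} (ha : trank a = 1) :
    ∃ c, a = fun _ => c := by
  obtain ⟨c, hc⟩ := Finset.card_eq_one.mp ha
  exact ⟨c, funext fun x =>
    Finset.mem_singleton.mp <| hc ▸ Finset.mem_image_of_mem a (Finset.mem_univ x)⟩

theorem two_mul_pow_self_le_succ_pow (hn : n ≠ 0) : 2 * n ^ n ≤ (n + 1) ^ n := by
  have := pow_add_mul_le_add_pow (a := n) (b := 1) (Nat.zero_le _) (Nat.zero_le _) n
  rw [Nat.cast_id, mul_one, mul_pow_sub_one hn] at this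
  omega

theorem exists_two_le_of_two_le_prod {ι : Type*} [Fintype ι] {f : ι → ℕ}
    (h : 2 ≤ ∏ i, f i) : ∃ i, 2 ≤ f i := by
  obtain ⟨i, -, hi⟩ :=
    Finset.exists_lt_of_prod_lt' (f := fun _ => 1) (g := f) (by rwa [Finset.prod_const_one])
  exact ⟨i, hi⟩

theorem card_fun_ne_eq_pow (c : Fin n) : Fintype.card ({x // x ≠ c} → Fin n) = n ^ (n - 1) := by
  simp [Fintype.card_subtype_compl]

section Decrement

variable {ι : Type*} [Fintype ι] [DecidableEq ι] (d t : ι → ℕ) {j : ι}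

theorem sum_add_update_pred_add_one (hj : t j ≠ 0) :
    ∑ i, (d i + update t j (t j - 1) i) + 1 = ∑ i, (d i + t i) := by
  rw [← Finset.add_sum_erase _ _ (Finset.mem_univ j),
    ← Finset.add_sum_erase _ _ (Finset.mem_univ j),
    Finset.sum_congr rfl fun i hi => by rw [update_of_ne (Finset.ne_of_mem_erase hi)], update_self]
  omega

theorem mul_prod_pow_update_pred (hj : t j ≠ 0) :
    d j * ∏ i, d i ^ update t j (t j - 1) i = ∏ i, d i ^ t i := by
  rw [← Finset.mul_prod_erase _ _ (Finset.mem_univ j),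
    ← Finset.mul_prod_erase _ _ (Finset.mem_univ j),
    Finset.prod_congr rfl fun i hi => by rw [update_of_ne (Finset.ne_of_mem_erase hi)], update_self,
    ← mul_assoc, mul_pow_sub_one hj]

end Decrement

/-- The numerical condition characterising the degree of a rank-one variant of `T_n`: at most `m`
points split into blocks, the `i`-th block having `d i` points in the image of the representation
and `t i` points outside it. -/
def BlockCondition (n m : ℕ) : Prop :=
  ∃ (ι : Type) (_ : Fintype ι) (d t : ι → ℕ),
    ∑ i, (d i + t i) ≤ m ∧ n ≤ ∏ i, d i ∧ n ^ (n - 1) ≤ ∏ i, d i ^ t i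

namespace BlockCondition

theorem mono {m' : ℕ} (h : BlockCondition n m) (hm : m ≤ m') : BlockCondition n m' := by
  obtain ⟨ι, _, d, t, hsum, hd, ht⟩ := h
  exact ⟨ι, inferInstance, d, t, hsum.trans hm, hd, ht⟩

theorem two_mul_sub_one (n : ℕ) : BlockCondition n (2 * n - 1) :=
  ⟨Unit, inferInstance, fun _ => n, fun _ => n - 1, by simp; omega, by simp, by simp⟩

theorem two_le (hn : 2 ≤ n) (h : BlockCondition n m) : 2 ≤ m := by
  obtain ⟨ι, _, d, t, hsum, hd, -⟩ := h
  obtain ⟨i, hi⟩ := exists_two_le_of_two_le_prod (hn.trans hd)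
  have := Finset.single_le_sum (fun j _ => Nat.zero_le (d j + t j)) (Finset.mem_univ i)
  omega

theorem pred (hn : n ≠ 0) (h : BlockCondition (n + 1) m) : BlockCondition n (m - 1) := by
  classical
  obtain ⟨ι, _, d, t, hsum, hd, ht⟩ := h
  rw [Nat.add_sub_cancel] at ht
  obtain ⟨j, hj⟩ : ∃ j, 2 ≤ d j ^ t j := exists_two_le_of_two_le_prod <|
    calc 2 ≤ n + 1 := by omega
      _ ≤ (n + 1) ^ n := Nat.le_self_pow hn _
      _ ≤ _ := ht
  have htj : t j ≠ 0 := by rintro h0; simp [h0] at hj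
  have hdj0 : d j ≠ 0 := by rintro h0; rw [h0, zero_pow htj] at hj; omega
  by_cases hdj : d j ≤ 2 * n
  · refine ⟨ι, inferInstance, d, update t j (t j - 1), ?_, Nat.le_of_succ_le hd, ?_⟩
    · have := sum_add_update_pred_add_one d t htj
      omega
    · refine Nat.le_of_mul_le_mul_left ?_ (Nat.pos_of_ne_zero hdj0)
      calc d j * n ^ (n - 1) ≤ 2 * n * n ^ (n - 1) := Nat.mul_le_mul_right _ hdj
        _ = 2 * n ^ n := by rw [mul_assoc, mul_pow_sub_one hn]
        _ ≤ (n + 1) ^ n := two_mul_pow_self_le_succ_pow hn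
        _ ≤ ∏ i, d i ^ t i := ht
        _ = _ := (mul_prod_pow_update_pred d t htj).symm
  · have := Finset.single_le_sum (fun i _ => Nat.zero_le (d i + t i)) (Finset.mem_univ j)
    exact (two_mul_sub_one n).mono (by omega)

end BlockCondition

def IsVariantEmbedding {X : Type*} (a : Fin n → Fin n) (φ : (Fin n → Fin n) → X → X) :
    Prop :=
  Injective φ ∧ ∀ f g, φ (fun x => g (a (f x))) = φ g ∘ φ f

def VariantEmbedsInto (a : Fin n → Fin n) (X : Type*) : Prop :=
  ∃ φ : (Fin n → Fin n) → X → X, IsVariantEmbedding a φ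

theorem VariantEmbedsInto.of_embedding {a : Fin n → Fin n} {X Y : Type*} [Nonempty X]
    (h : VariantEmbedsInto a X) (e : X ↪ Y) : VariantEmbedsInto a Y := by
  obtain ⟨φ, hinj, hmul⟩ := h
  have hret : invFun e ∘ e = id := invFun_comp e.injective
  refine ⟨fun g => e ∘ φ g ∘ invFun e, fun g g' h => hinj ?_, fun f g => ?_⟩
  · have := congrArg (· ∘ e) h
    simp only [comp_assoc, hret, comp_id] at this
    exact e.injective.comp_left this
  · simp only [hmul, comp_assoc]
    rw [← comp_assoc (invFun e) e, hret, id_comp]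

theorem variantDegree_le {a : Fin n → Fin n} (h : 1 ≤ m ∧ VariantEmbedsInto a (Fin m)) :
    variantDegree n a ≤ m := by
  unfold variantDegree
  exact Nat.sInf_le h

theorem variantDegree_spec {a : Fin n → Fin n} (h : 1 ≤ m ∧ VariantEmbedsInto a (Fin m)) :
    1 ≤ variantDegree n a ∧ VariantEmbedsInto a (Fin (variantDegree n a)) := by
  unfold variantDegree
  exact Nat.sInf_mem (s := {m | 1 ≤ m ∧ VariantEmbedsInto a (Fin m)}) ⟨m, h⟩

theorem variantDegree_one_le_one (a : Fin 1 → Fin 1) : variantDegree 1 a ≤ 1 :=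
  variantDegree_le ⟨le_rfl, fun _ => id, fun _ _ _ => Subsingleton.elim _ _, fun _ _ => rfl⟩

section Construction

variable {ι : Type*} [Fintype ι] {d t : ι → ℕ}

-- `g` acts through `g c`, written on the range points of all blocks, and through its values off
-- `c`, coded as maps from the other points of each block to its range points.
theorem variantEmbedsInto_sigma (c : Fin n) (hd : n ≤ ∏ i, d i)
    (ht : n ^ (n - 1) ≤ ∏ i, d i ^ t i) :
    VariantEmbedsInto (fun _ => c) (Σ i, Fin (d i) ⊕ Fin (t i)) := by
  classical
  obtain ⟨τ⟩ : Nonempty (Fin n ↪ ∀ i, Fin (d i)) :=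
    Function.Embedding.nonempty_of_card_le (by simpa using hd)
  obtain ⟨ρ₀⟩ : Nonempty (({x // x ≠ c} → Fin n) ↪ ∀ i, Fin (t i) → Fin (d i)) :=
    Function.Embedding.nonempty_of_card_le (by simpa [card_fun_ne_eq_pow] using ht)
  let split := Equiv.funSplitAt c (Fin n)
  -- `ρ k` codes the constant map `k` by the constant words `τ k`, as `f ⋆ g` requires
  let ρ (k : Fin n) := ρ₀.setValue (split fun _ => k).2 fun i _ => τ k i
  refine ⟨fun g x =>
    ⟨x.1, .inl (Sum.elim (fun _ => τ (g c) x.1) (ρ (g c) (split g).2 x.1) x.2)⟩,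
    fun g g' h => ?_, fun f g => ?_⟩
  · have hc : g c = g' c := τ.injective <| funext fun i => by
      simpa using congrFun h ⟨i, .inl (τ c i)⟩
    have hrest : (split g).2 = (split g').2 :=
      (ρ (g c)).injective <| funext fun i => funext fun q => by
        simpa [hc] using congrFun h ⟨i, .inr q⟩
    exact split.injective (Prod.ext hc hrest)
  · funext x
    obtain ⟨i, p | q⟩ := x
    · rfl
    · simp [ρ, Function.Embedding.setValue_eq]

end Construction

theorem BlockCondition.variantEmbedsInto (hn : 2 ≤ n) (c : Fin n) (h : BlockCondition n m) :
    1 ≤ m ∧ VariantEmbedsInto (fun _ => c) (Fin m) := by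
  obtain ⟨ι, _, d, t, hsum, hd, ht⟩ := h
  obtain ⟨i, hi⟩ := exists_two_le_of_two_le_prod (hn.trans hd)
  have : Nonempty (Σ i, Fin (d i) ⊕ Fin (t i)) := ⟨⟨i, .inl ⟨0, by omega⟩⟩⟩
  have hcard : Fintype.card (Σ i, Fin (d i) ⊕ Fin (t i)) ≤ m := by simpa using hsum
  obtain ⟨e⟩ : Nonempty ((Σ i, Fin (d i) ⊕ Fin (t i)) ↪ Fin m) :=
    Function.Embedding.nonempty_of_card_le (by simpa using hcard)
  exact ⟨Fintype.card_pos.trans_le hcard,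
    (variantEmbedsInto_sigma c hd ht).of_embedding e⟩

namespace IsVariantEmbedding

variable {X : Type} {c : Fin n} {φ : (Fin n → Fin n) → X → X}

theorem map_const (hφ : IsVariantEmbedding (fun _ => c) φ) (f g : Fin n → Fin n) :
    φ (fun _ => g c) = φ g ∘ φ f :=
  hφ.2 f g

variable (φ) in
/-- Points of equal profile form the blocks of the representation. -/
def profile (z : X) : Fin n → X := fun i => φ (fun _ => i) z

variable (φ) in
def jointRange : Set X := ⋃ f, Set.range (φ f)

variable (φ) in
abbrev Block (k : Set.range (profile φ)) : Type :=
  {z // Set.rangeFactorization (profile φ) z = k}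

theorem map_mem_jointRange (f : Fin n → Fin n) (z : X) : φ f z ∈ jointRange φ :=
  Set.mem_iUnion.2 ⟨f, z, rfl⟩

theorem profile_map (hφ : IsVariantEmbedding (fun _ => c) φ) (f : Fin n → Fin n) (z : X) :
    profile φ (φ f z) = profile φ z :=
  funext fun i => (congrFun (hφ.map_const f fun _ => i) z).symm

theorem map_eq_map_of_mem_jointRange (hφ : IsVariantEmbedding (fun _ => c) φ)
    {g g' : Fin n → Fin n} (h : g c = g' c) {z : X} (hz : z ∈ jointRange φ) :
    φ g z = φ g' z := by
  obtain ⟨f, y, rfl⟩ := Set.mem_iUnion.1 hz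
  rw [← comp_apply (f := φ g), ← hφ.map_const, h, hφ.map_const f g']
  rfl

theorem profile_apply_of_mem_range (hφ : IsVariantEmbedding (fun _ => c) φ) {k : Fin n → X}
    (hk : k ∈ Set.range (profile φ)) (i : Fin n) :
    profile φ (k i) = k ∧ k i ∈ jointRange φ := by
  obtain ⟨z, rfl⟩ := hk
  exact ⟨profile_map hφ _ z, map_mem_jointRange _ z⟩

/-- The constant map `i` is determined by the `i`-th entries of the profiles of all blocks. -/
theorem exists_injective_const (hφ : IsVariantEmbedding (fun _ => c) φ) :
    ∃ e : Fin n → ∀ k, {w : Block φ k // w.1 ∈ jointRange φ}, Injective e := by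
  refine ⟨fun i k => ⟨⟨k.1 i, Subtype.ext (hφ.profile_apply_of_mem_range k.2 i).1⟩,
    (hφ.profile_apply_of_mem_range k.2 i).2⟩, fun i i' h => ?_⟩
  have : φ (fun _ => i) = φ (fun _ => i') := funext fun z =>
    congrArg (fun e => e.1.1) (congrFun h (Set.rangeFactorization (profile φ) z))
  exact congrFun (hφ.1 this) c

/-- A map fixing `c` is determined by its action off the joint range, which sends each block
into the part of that block inside the joint range. -/
theorem exists_injective_fixing (hφ : IsVariantEmbedding (fun _ => c) φ) :
    ∃ e : ({x // x ≠ c} → Fin n) → ∀ k,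
      {w : Block φ k // w.1 ∉ jointRange φ} → {w : Block φ k // w.1 ∈ jointRange φ},
      Injective e := by
  classical
  let g (u : {x // x ≠ c} → Fin n) : Fin n → Fin n := (Equiv.funSplitAt c (Fin n)).symm (c, u)
  have hg : Injective g := (Equiv.injective _).comp (Prod.mk_right_injective c)
  refine ⟨fun u k w => ⟨⟨φ (g u) w.1.1, (Subtype.ext (profile_map hφ _ _)).trans w.1.2⟩,
    map_mem_jointRange _ _⟩, fun u u' h => hg (hφ.1 (funext fun z => ?_))⟩
  by_cases hz : z ∈ jointRange φ
  · exact map_eq_map_of_mem_jointRange hφ (by simp [g]) hz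
  · exact congrArg (fun e => e.1.1) (congrFun (congrFun h _) ⟨⟨z, rfl⟩, hz⟩)

theorem blockCondition [Finite X] (hφ : IsVariantEmbedding (fun _ => c) φ) :
    BlockCondition n (Nat.card X) := by
  classical
  have := Fintype.ofFinite X
  let D k := {w : Block φ k // w.1 ∈ jointRange φ}
  let T k := {w : Block φ k // w.1 ∉ jointRange φ}
  refine ⟨Set.range (profile φ), inferInstance, fun k => Nat.card (D k), fun k => Nat.card (T k),
    ?_, ?_, ?_⟩
  · have e : X ≃ Σ k, D k ⊕ T k := (Equiv.sigmaFiberEquiv _).symm.trans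
      (Equiv.sigmaCongrRight fun k => (Equiv.sumCompl _).symm)
    rw [Nat.card_congr e, Nat.card_sigma]
    simp only [Nat.card_sum, le_refl]
  · obtain ⟨e, he⟩ := hφ.exists_injective_const
    have := Nat.card_le_card_of_injective e he
    rwa [Nat.card_fin, Nat.card_pi] at this
  · obtain ⟨e, he⟩ := hφ.exists_injective_fixing
    have := Nat.card_le_card_of_injective e he
    rw [Nat.card_eq_fintype_card, card_fun_ne_eq_pow, Nat.card_pi] at this
    simpa only [Nat.card_fun] using this

end IsVariantEmbedding

end

/-- The degrees of the rank-`1` variants of the full transformation semigroups are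
strictly increasing: `μ(1) < μ(2) < μ(3) < ⋯`. -/
theorem variant_degree_strict_mono (n : ℕ) (hn : 1 ≤ n)
    (a : Fin n → Fin n) (b : Fin (n + 1) → Fin (n + 1))
    (ha : trank a = 1) (hb : trank b = 1) :
    variantDegree n a < variantDegree (n + 1) b := by
  obtain ⟨c, rfl⟩ := exists_eq_const_of_trank_eq_one ha
  obtain ⟨c', rfl⟩ := exists_eq_const_of_trank_eq_one hb
  obtain ⟨-, φ, hφ⟩ :=
    variantDegree_spec ((BlockCondition.two_mul_sub_one (n + 1)).variantEmbedsInto (by omega) c')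
  have hB : BlockCondition (n + 1) (variantDegree (n + 1) fun _ => c') := by
    simpa using hφ.blockCondition
  obtain rfl | hn := hn.eq_or_lt
  · exact (variantDegree_one_le_one _).trans_lt (hB.two_le le_rfl)
  · have hm := (hB.pred (by omega)).variantEmbedsInto hn c
    exact (variantDegree_le hm).trans_lt (by omega)
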